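/- Let A = (0, a_2, a_3, …) be a sequence of nonnegative integers with a_1 = 0. For all complex numbers z with |z| ≤ 1, the series Σ_{m=0}^{∞} e_{A,m} z^m converges and equals the convergent infinite product Π_p ( 1 − 1/p² + Σ_{j=2}^{∞} z^{a_j} (1/p^j − 1/p^{j+1}) ) taken over all primes p. -/

import Mathlib

open scoped BigOperators

/-- A positive integer is *powerful* if every prime dividing it divides it with
multiplicity at least `2`. -/
def Powerful (f : ℕ) : Prop := 0 < f ∧ ∀ p : ℕ, p.Prime → p ∣ f → p ^ 2 ∣ f

/-- The additive function `ω_A(n) = ∑_j a_j ω_j(n)` for a sequence of natural numbers. -/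
def omegaA (a : ℕ → ℕ) (n : ℕ) : ℕ :=
  ∑ p ∈ n.primeFactors, a (n.factorization p)

/-- The density `e_{A,m}` of integers `n` with `ω_A(n) = m`. -/
noncomputable def eAm (a : ℕ → ℕ) (m : ℕ) : ℝ :=
  6 / Real.pi ^ 2 *
    ∑' f : {f : ℕ // Powerful f ∧ omegaA a f = m},
      ((f : ℕ) : ℝ)⁻¹ * ∏ p ∈ (f : ℕ).primeFactors, (1 + 1 / (p : ℝ))⁻¹

/-!
Weight each `n` by `g(n) = [n powerful] z ^ ω_A(n) / ψ(n)`, where `ψ(n) = n ∏_{p ∣ n} (1 + 1/p)`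
is Dedekind's function. Powerfulness, `ω_A` and `ψ` all split over coprime factors, so `g` is
multiplicative; and `‖g(n)‖ ≤ 1/n` on powerful numbers, whose reciprocals are summable because
every powerful number is of the form `m² b³`. Hence `∑ g(n)` has an Euler product with local
factors `1 + ∑_{j ≥ 2} z ^ a_j p^{-j} (1 + 1/p)⁻¹`. Multiplying by
`∏_p (1 - p⁻²) = 1/ζ(2) = 6/π²` turns these into the stated factors, while grouping
`∑ (6/π²) g(n)` by the value `m = ω_A(n)` gives `∑ e_{A,m} z^m`.
-/

open Real

lemma powerful_one : Powerful 1 :=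
  ⟨one_pos, fun _ hp hd => (hp.ne_one (Nat.dvd_one.mp hd)).elim⟩

lemma Nat.Prime.not_powerful {p : ℕ} (hp : p.Prime) : ¬ Powerful p := fun h => by
  have := (Nat.pow_dvd_pow_iff_le_right hp.one_lt).mp
    (by simpa using h.2 p hp dvd_rfl : p ^ 2 ∣ p ^ 1)
  omega

lemma Nat.Prime.powerful_pow {p e : ℕ} (hp : p.Prime) (he : e ≠ 1) : Powerful (p ^ e) := by
  refine ⟨pow_pos hp.pos e, fun q hq hd => ?_⟩
  obtain rfl : q = p := (Nat.prime_dvd_prime_iff_eq hq hp).mp (hq.dvd_of_dvd_pow hd)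
  have he0 : e ≠ 0 := by rintro rfl; exact hq.ne_one (Nat.dvd_one.mp (by simpa using hd))
  exact pow_dvd_pow q (by omega)

lemma Nat.Coprime.powerful_mul_iff {m n : ℕ} (h : m.Coprime n) :
    Powerful (m * n) ↔ Powerful m ∧ Powerful n := by
  constructor
  · rintro ⟨hpos, hdvd⟩
    refine ⟨⟨Nat.pos_of_mul_pos_right hpos, fun p hp hd => ?_⟩,
      ⟨Nat.pos_of_mul_pos_left hpos, fun p hp hd => ?_⟩⟩
    · exact ((Nat.coprime_comm.mp h).coprime_dvd_right hd).symm.pow_left 2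
        |>.dvd_of_dvd_mul_right (hdvd p hp (hd.mul_right n))
    · exact (h.coprime_dvd_right hd).symm.pow_left 2
        |>.dvd_of_dvd_mul_left (hdvd p hp (hd.mul_left m))
  · rintro ⟨⟨hm, hm'⟩, ⟨hn, hn'⟩⟩
    refine ⟨mul_pos hm hn, fun p hp hd => ?_⟩
    rcases hp.dvd_mul.mp hd with hd | hd
    · exact (hm' p hp hd).mul_right n
    · exact (hn' p hp hd).mul_left m

lemma Powerful.exists_eq_sq_mul_cube {n : ℕ} (h : Powerful n) : ∃ m b : ℕ, n = m ^ 2 * b ^ 3 := by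
  obtain ⟨s, b, hs, hb, hn, hsq⟩ := Nat.sq_mul_squarefree_of_pos h.1
  -- `n = b² s` with `s` squarefree; powerfulness forces every prime of `s` to divide `b`.
  suffices hdvd : s ∣ b by
    obtain ⟨c, rfl⟩ := hdvd
    exact ⟨c, s, by rw [← hn]; ring⟩
  rw [← Nat.factorization_le_iff_dvd hs.ne' hb.ne']
  intro p
  rcases Nat.eq_zero_or_pos (s.factorization p) with h0 | hpos
  · simp [h0]
  have hps : p ∣ s := Nat.dvd_of_factorization_pos hpos.ne'
  have hp : p.Prime := Nat.prime_of_mem_primeFactors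
    (Nat.support_factorization s ▸ Finsupp.mem_support_iff.mpr hpos.ne')
  have h2 : 2 ≤ n.factorization p :=
    (hp.pow_dvd_iff_le_factorization h.1.ne').mp (h.2 p hp (hn ▸ hps.mul_left _))
  have hfn : n.factorization p = 2 * b.factorization p + s.factorization p := by
    rw [← hn, Nat.factorization_mul (pow_ne_zero _ hb.ne') hs.ne', Nat.factorization_pow]
    simp
  have := hsq.natFactorization_le_one p
  omega

lemma summable_indicator_powerful_inv :
    Summable ({n | Powerful n}.indicator fun n : ℕ => (n : ℝ)⁻¹) := by
  rw [← summable_subtype_iff_indicator]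
  have hsum : Summable (fun q : ℕ × ℕ => ((q.1 : ℝ) ^ 2)⁻¹ * ((q.2 : ℝ) ^ 3)⁻¹) := by
    have h2 : Summable (fun m : ℕ => ((m : ℝ) ^ 2)⁻¹) := by simp
    have h3 : Summable (fun m : ℕ => ((m : ℝ) ^ 3)⁻¹) := by simp
    exact h2.mul_of_nonneg h3 (fun _ => by positivity) (fun _ => by positivity)
  have hdec (f : {n | Powerful n}) : ∃ q : ℕ × ℕ, (f : ℕ) = q.1 ^ 2 * q.2 ^ 3 :=
    let ⟨m, b, h⟩ := Powerful.exists_eq_sq_mul_cube f.2; ⟨(m, b), h⟩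
  choose q hq using hdec
  have hinj : Function.Injective q := fun f g hfg => Subtype.ext (by rw [hq f, hq g, hfg])
  refine (hsum.comp_injective hinj).congr fun f => ?_
  simp [hq f, mul_comm]

lemma omegaA_eq_sum_factorization (a : ℕ → ℕ) (n : ℕ) :
    omegaA a n = n.factorization.sum fun _ e => a e := by
  simp [omegaA, Finsupp.sum]

lemma Nat.Coprime.omegaA_mul (a : ℕ → ℕ) {m n : ℕ} (h : m.Coprime n) :
    omegaA a (m * n) = omegaA a m + omegaA a n := by
  simp only [omegaA_eq_sum_factorization, Nat.factorization_mul_of_coprime h]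
  exact Finsupp.sum_add_index_of_disjoint
    (by simpa only [Nat.support_factorization] using h.disjoint_primeFactors) _

lemma Nat.Prime.omegaA_pow (a : ℕ → ℕ) {p e : ℕ} (hp : p.Prime) :
    omegaA a (p ^ e) = if e = 0 then 0 else a e := by
  split_ifs with he
  · simp [he, omegaA]
  · simp [omegaA, Nat.primeFactors_prime_pow he hp, hp.factorization_pow]

/-- `1 / ψ(n)` for Dedekind's `ψ(n) = n ∏_{p ∣ n} (1 + 1/p)`: the weight of `n` in `eAm`. -/
noncomputable def invDedekindPsi (n : ℕ) : ℝ :=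
  (n : ℝ)⁻¹ * ∏ p ∈ n.primeFactors, (1 + 1 / (p : ℝ))⁻¹

lemma invDedekindPsi_nonneg (n : ℕ) : 0 ≤ invDedekindPsi n := by
  unfold invDedekindPsi
  positivity

lemma invDedekindPsi_le_inv (n : ℕ) : invDedekindPsi n ≤ (n : ℝ)⁻¹ :=
  mul_le_of_le_one_right (by positivity) <| Finset.prod_le_one (fun _ _ => by positivity)
    fun _ _ => inv_le_one_of_one_le₀ (le_add_of_nonneg_right (by positivity))

lemma Nat.Coprime.invDedekindPsi_mul {m n : ℕ} (h : m.Coprime n) :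
    invDedekindPsi (m * n) = invDedekindPsi m * invDedekindPsi n := by
  simp only [invDedekindPsi, h.primeFactors_mul, Finset.prod_union h.disjoint_primeFactors,
    Nat.cast_mul, mul_inv]
  ring

lemma Nat.Prime.one_sub_inv_sq_mul_invDedekindPsi_pow {p e : ℕ} (hp : p.Prime) (he : e ≠ 0) :
    (1 - 1 / (p : ℝ) ^ 2) * invDedekindPsi (p ^ e) = 1 / (p : ℝ) ^ e - 1 / (p : ℝ) ^ (e + 1) := by
  have : (p : ℝ) ≠ 0 := by exact_mod_cast hp.ne_zero
  have : (p : ℝ) + 1 ≠ 0 := by positivity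
  simp only [invDedekindPsi, Nat.primeFactors_prime_pow he hp, Finset.prod_singleton,
    Nat.cast_pow]
  field_simp
  ring

noncomputable def powerfulTerm (a : ℕ → ℕ) (z : ℂ) : ℕ → ℂ :=
  {n | Powerful n}.indicator fun n => z ^ omegaA a n * invDedekindPsi n

section powerfulTerm

variable (a : ℕ → ℕ) (z : ℂ)

lemma powerfulTerm_of_powerful {n : ℕ} (h : Powerful n) :
    powerfulTerm a z n = z ^ omegaA a n * invDedekindPsi n :=
  Set.indicator_of_mem (s := {n | Powerful n}) h _

lemma powerfulTerm_of_not_powerful {n : ℕ} (h : ¬ Powerful n) : powerfulTerm a z n = 0 :=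
  Set.indicator_of_notMem (s := {n | Powerful n}) h _

lemma powerfulTerm_zero : powerfulTerm a z 0 = 0 :=
  powerfulTerm_of_not_powerful a z fun h => h.1.ne' rfl

lemma powerfulTerm_one : powerfulTerm a z 1 = 1 := by
  simp [powerfulTerm_of_powerful a z powerful_one, omegaA, invDedekindPsi]

lemma powerfulTerm_mul {m n : ℕ} (h : m.Coprime n) :
    powerfulTerm a z (m * n) = powerfulTerm a z m * powerfulTerm a z n := by
  by_cases hmn : Powerful m ∧ Powerful n
  · rw [powerfulTerm_of_powerful a z (h.powerful_mul_iff.mpr hmn),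
      powerfulTerm_of_powerful a z hmn.1, powerfulTerm_of_powerful a z hmn.2, h.omegaA_mul,
      h.invDedekindPsi_mul]
    push_cast
    ring
  · rw [powerfulTerm_of_not_powerful a z (mt h.powerful_mul_iff.mp hmn)]
    rcases not_and_or.mp hmn with hm | hn
    · rw [powerfulTerm_of_not_powerful a z hm, zero_mul]
    · rw [powerfulTerm_of_not_powerful a z hn, mul_zero]

variable {z}

lemma summable_norm_powerfulTerm (hz : ‖z‖ ≤ 1) : Summable fun n => ‖powerfulTerm a z n‖ := by
  refine summable_indicator_powerful_inv.of_nonneg_of_le (fun _ => norm_nonneg _) fun n => ?_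
  rw [powerfulTerm, norm_indicator_eq_indicator_norm]
  refine Set.indicator_le_indicator ?_
  rw [norm_mul, norm_pow, Complex.norm_real, Real.norm_of_nonneg (invDedekindPsi_nonneg n)]
  exact (mul_le_of_le_one_left (invDedekindPsi_nonneg n) (pow_le_one₀ (norm_nonneg z) hz)).trans
    (invDedekindPsi_le_inv n)

lemma Nat.Prime.one_sub_inv_sq_mul_powerfulTerm_pow {p : ℕ} (hp : p.Prime) (e : ℕ) :
    (1 - 1 / (p : ℂ) ^ 2) * powerfulTerm a z (p ^ e) =
      (if e = 0 then 1 - 1 / (p : ℂ) ^ 2 else 0) +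
        if 2 ≤ e then z ^ a e * (1 / (p : ℂ) ^ e - 1 / (p : ℂ) ^ (e + 1)) else 0 := by
  match e with
  | 0 => simp [powerfulTerm_one]
  | 1 => simp [powerfulTerm_of_not_powerful a z hp.not_powerful]
  | e + 2 =>
    have hψ := congrArg (fun x : ℝ => (x : ℂ))
      (hp.one_sub_inv_sq_mul_invDedekindPsi_pow (e := e + 2) (by omega))
    push_cast at hψ
    rw [powerfulTerm_of_powerful a z (hp.powerful_pow (by omega)), hp.omegaA_pow,
      if_neg (by omega), if_neg (by omega), if_pos (by omega), zero_add, ← hψ]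
    ring

lemma Nat.Prime.one_sub_inv_sq_mul_tsum_powerfulTerm_pow (hz : ‖z‖ ≤ 1) {p : ℕ} (hp : p.Prime) :
    (1 - 1 / (p : ℂ) ^ 2) * ∑' e, powerfulTerm a z (p ^ e) =
      1 - 1 / (p : ℂ) ^ 2 +
        ∑' j : ℕ, if 2 ≤ j then z ^ a j * (1 / (p : ℂ) ^ j - 1 / (p : ℂ) ^ (j + 1)) else 0 := by
  have hsum : Summable fun e => powerfulTerm a z (p ^ e) :=
    (summable_norm_powerfulTerm a hz).of_norm.comp_injective (Nat.pow_right_injective hp.two_le)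
  have h := (hsum.hasSum.mul_left (1 - 1 / (p : ℂ) ^ 2)).sub
    (hasSum_ite_eq 0 (1 - 1 / (p : ℂ) ^ 2))
  simp only [hp.one_sub_inv_sq_mul_powerfulTerm_pow a, add_sub_cancel_left] at h
  rw [h.tsum_eq]
  ring

end powerfulTerm

lemma hasProd_one_sub_inv_sq :
    HasProd (fun p : Nat.Primes => 1 - 1 / ((p : ℕ) : ℂ) ^ 2) ((6 / π ^ 2 : ℝ) : ℂ) := by
  have h := (riemannZeta_eulerProduct_hasProd (s := 2) (by norm_num)).inv₀
    (by simp [riemannZeta_two, pi_ne_zero])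
  have hfactor : (fun p : Nat.Primes => (1 - ((p : ℕ) : ℂ) ^ (-2 : ℂ))⁻¹⁻¹) =
      fun p : Nat.Primes => 1 - 1 / ((p : ℕ) : ℂ) ^ 2 := by
    ext p
    rw [inv_inv, ← Complex.cpow_natCast, one_div, ← Complex.cpow_neg]
    norm_num
  rw [hfactor, riemannZeta_two, inv_div] at h
  exact_mod_cast h

lemma hasSum_powerfulTerm_fiber (a : ℕ → ℕ) (z : ℂ) (m : ℕ) :
    HasSum (fun f : {f : ℕ // Powerful f ∧ omegaA a f = m} =>
      ((6 / π ^ 2 : ℝ) : ℂ) * powerfulTerm a z f) (eAm a m * z ^ m) := by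
  have hψ : Summable fun f : {f : ℕ // Powerful f ∧ omegaA a f = m} => invDedekindPsi f := by
    refine (summable_indicator_powerful_inv.comp_injective Subtype.val_injective).of_nonneg_of_le
      (fun f => invDedekindPsi_nonneg f) fun f => ?_
    rw [Function.comp_apply, Set.indicator_of_mem (s := {n | Powerful n}) f.2.1]
    exact invDedekindPsi_le_inv f
  have heAm : eAm a m = 6 / π ^ 2 * ∑' f : {f : ℕ // Powerful f ∧ omegaA a f = m},
      invDedekindPsi f := rfl
  have hterm : (fun f : {f : ℕ // Powerful f ∧ omegaA a f = m} =>
      ((6 / π ^ 2 : ℝ) : ℂ) * powerfulTerm a z f) =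
      fun f : {f : ℕ // Powerful f ∧ omegaA a f = m} =>
        ((6 / π ^ 2 : ℝ) : ℂ) * (invDedekindPsi f : ℂ) * z ^ m := by
    funext f
    rw [powerfulTerm_of_powerful a z f.2.1, f.2.2]
    ring
  rw [hterm, heAm, Complex.ofReal_mul]
  exact ((Complex.hasSum_ofReal.mpr hψ.hasSum).mul_left _).mul_right _

def powerfulSigmaEquiv (a : ℕ → ℕ) :
    (Σ m : ℕ, {f : ℕ // Powerful f ∧ omegaA a f = m}) ≃ {n : ℕ | Powerful n} where
  toFun x := ⟨x.2, x.2.2.1⟩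
  invFun n := ⟨omegaA a n, n, n.2, rfl⟩
  left_inv := by rintro ⟨m, f, hf, rfl⟩; rfl
  right_inv _ := rfl

theorem eAm_generating_function_general (a : ℕ → ℕ) (z : ℂ) (hz : ‖z‖ ≤ 1) :
    ∃ P : ℂ,
      HasProd (fun p : Nat.Primes =>
        1 - 1 / ((p : ℕ) : ℂ) ^ 2 +
          ∑' j : ℕ, if 2 ≤ j then
            z ^ (a j) * (1 / ((p : ℕ) : ℂ) ^ j - 1 / ((p : ℕ) : ℂ) ^ (j + 1)) else 0) P ∧
      HasSum (fun m : ℕ => (eAm a m : ℂ) * z ^ m) P := by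
  have hsum := summable_norm_powerfulTerm a hz
  refine ⟨((6 / π ^ 2 : ℝ) : ℂ) * ∑' n, powerfulTerm a z n, ?_, ?_⟩
  · have hEuler := EulerProduct.eulerProduct_hasProd (powerfulTerm_one a z)
      (powerfulTerm_mul a z) hsum (powerfulTerm_zero a z)
    convert hasProd_one_sub_inv_sq.mul hEuler using 2 with p
    exact (p.2.one_sub_inv_sq_mul_tsum_powerfulTerm_pow a hz).symm
  · have hpowerful : HasSum
        (fun n : {n : ℕ | Powerful n} => ((6 / π ^ 2 : ℝ) : ℂ) * powerfulTerm a z n)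
        (((6 / π ^ 2 : ℝ) : ℂ) * ∑' n, powerfulTerm a z n) :=
      (hasSum_subtype_iff_of_support_subset ((Function.support_mul_subset_right _ _).trans
        Set.support_indicator_subset)).mpr (hsum.of_norm.hasSum.mul_left _)
    exact ((powerfulSigmaEquiv a).hasSum_iff.mpr hpowerful).sigma (hasSum_powerfulTerm_fiber a z)

theorem eAm_generating_function (a : ℕ → ℕ) (h1 : a 1 = 0) (z : ℂ) (hz : ‖z‖ ≤ 1) :
    ∃ P : ℂ,
      HasProd (fun p : Nat.Primes =>
        1 - 1 / ((p : ℕ) : ℂ) ^ 2 +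
          ∑' j : ℕ, if 2 ≤ j then
            z ^ (a j) * (1 / ((p : ℕ) : ℂ) ^ j - 1 / ((p : ℕ) : ℂ) ^ (j + 1)) else 0) P ∧
      HasSum (fun m : ℕ => (eAm a m : ℂ) * z ^ m) P :=
  eAm_generating_function_general a z hz
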